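/- Let Σ_s(λ) (s ≥ 0) be the subsets of P⁺ attached to λ ∈ P⁺(1) by the recursive definition of the paper. Then for any μ ∈ Σ_s(λ): μ(h_k) = 0 for all k < min λ − 1, μ(h_{min λ − 1}) ≤ 1, and λ − μ ∈ Σ_{k ≥ min λ} ℤ₊ α_k. -/
import Mathlib


open Finset

abbrev Wt (n : ℕ) := Fin n → ℤ

def omegaW (n : ℕ) (k : ℕ) : Wt n := fun i => if (i : ℕ) + 1 = k then 1 else 0

def alphaW (n : ℕ) (k : ℕ) : Wt n := fun i =>
  if (i : ℕ) + 1 = k then 2 else if (i : ℕ) + 2 = k ∨ (i : ℕ) = k then -1 else 0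

def coeffW (n : ℕ) (l : Wt n) (k : ℕ) : ℤ := ∑ i : Fin n, if (i : ℕ) + 1 = k then l i else 0

def IsDom (n : ℕ) (l : Wt n) : Prop := ∀ i, 0 ≤ l i

def IsDomOne (n : ℕ) (l : Wt n) : Prop := ∀ i, 0 ≤ l i ∧ l i ≤ 1

def InQplus (n : ℕ) (w : Wt n) : Prop :=
  ∃ c : ℕ → ℕ, w = ∑ k ∈ Finset.Icc 1 n, (c k : ℤ) • alphaW n k

def InQ (n : ℕ) (w : Wt n) : Prop :=
  ∃ c : ℕ → ℤ, w = ∑ k ∈ Finset.Icc 1 n, c k • alphaW n k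

noncomputable def formW (n : ℕ) (x y : Wt n) : ℚ :=
  ∑ i : Fin n, ∑ j : Fin n, (x i : ℚ) * (y j : ℚ) *
    ((((min i.val j.val : ℕ) : ℚ) + 1) * ((n : ℚ) + 1 - (((max i.val j.val : ℕ) : ℚ) + 1)) / ((n : ℚ) + 1))

noncomputable def qpow (r : ℚ) : RatFunc ℚ := if r.den = 1 then RatFunc.X ^ r.num else 0

noncomputable def qint (k : ℤ) : RatFunc ℚ := (1 - RatFunc.X ^ k) / (1 - RatFunc.X)

noncomputable def qbinom (m r : ℤ) : RatFunc ℚ :=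
  if 0 ≤ r ∧ r ≤ m then ∏ k ∈ Finset.range r.toNat, qint (m - (k : ℤ)) / qint ((k : ℤ) + 1) else 0

noncomputable def qbinomQ (m r : ℚ) : RatFunc ℚ :=
  if m.den = 1 ∧ r.den = 1 then qbinom m.num r.num else 0

def alphaSumW (n m p : ℕ) : Wt n := ∑ k ∈ Finset.Icc m p, alphaW n k

def htW (n : ℕ) (l : Wt n) : ℤ := ∑ i, l i

/-- `IsMinIdx n l m` : m = min l = min{ i : l(h_i) > 0 }. -/
def IsMinIdx (n : ℕ) (l : Wt n) (m : ℕ) : Prop :=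
  0 < coeffW n l m ∧ ∀ k < m, coeffW n l k = 0

mutual
/-- μ ∈ Σ_s⁰(λ) in the recursive definition of the paper. -/
inductive Sig0 (n : ℕ) : ℕ → Wt n → Wt n → Prop where
  | base (l : Wt n) : Sig0 n 0 l l
  | step0 (s m : ℕ) (l mu : Wt n) (hs : 0 < s) (hht : 2 ≤ htW n l)
      (hm : IsMinIdx n l m) (h : Sig0 n s (l - omegaW n m) mu) :
      Sig0 n s l (omegaW n m + mu)
  | step1 (s m : ℕ) (l mu : Wt n) (hs : 0 < s) (hht : 2 ≤ htW n l)
      (hm : IsMinIdx n l m) (h : Sig1 n s (l - omegaW n m) mu) :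
      Sig0 n s l (omegaW n m + mu)

/-- μ ∈ Σ_s¹(λ) in the recursive definition of the paper. -/
inductive Sig1 (n : ℕ) : ℕ → Wt n → Wt n → Prop where
  | caseA (s m p : ℕ) (l mu : Wt n) (hht : 2 ≤ htW n l) (hm : IsMinIdx n l m)
      (hp : IsMinIdx n (l - omegaW n m) p) (h0 : coeffW n l (p + 1) = 0)
      (h : Sig0 n s (l - alphaSumW n m p) mu) : Sig1 n (s + 1) l mu
  | caseB1 (m p : ℕ) (l : Wt n) (hht : 2 ≤ htW n l) (hm : IsMinIdx n l m)
      (hp : IsMinIdx n (l - omegaW n m) p) (h1 : coeffW n l (p + 1) = 1) :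
      Sig1 n 1 l (l - alphaSumW n m p)
  | caseB2 (s m p : ℕ) (l mu : Wt n) (hht : 2 ≤ htW n l) (hm : IsMinIdx n l m)
      (hp : IsMinIdx n (l - omegaW n m) p) (h1 : coeffW n l (p + 1) = 1)
      (h : Sig0 n (s + 1) (l - 2 • omegaW n (p + 1) - alphaSumW n m p) mu) :
      Sig1 n (s + 2) l (2 • omegaW n (p + 1) + mu)
  | caseB3 (s m p : ℕ) (l mu : Wt n) (hht : 2 ≤ htW n l) (hm : IsMinIdx n l m)
      (hp : IsMinIdx n (l - omegaW n m) p) (h1 : coeffW n l (p + 1) = 1)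
      (h : Sig0 n s (l - 2 • omegaW n (p + 1) - alphaSumW n m p) mu) :
      Sig1 n (s + 2) l (2 • omegaW n (p + 1) - alphaW n (p + 1) + mu)
end

-- infrastructure
lemma sum_pick {n : ℕ} (k : ℕ) (h1 : 1 ≤ k) (h2 : k ≤ n) (f : Fin n → ℤ) :
    (∑ i : Fin n, if (i : ℕ) + 1 = k then f i else 0) = f ⟨k - 1, by omega⟩ := by
  rw [Finset.sum_eq_single_of_mem (⟨k - 1, by omega⟩ : Fin n) (Finset.mem_univ _)]
  · simp; omega
  · intro i _ hne
    rw [if_neg]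
    intro h
    exact hne (Fin.ext (by simp; omega))

lemma sum_pick_zero {n : ℕ} (k : ℕ) (h : k = 0 ∨ n < k) (f : Fin n → ℤ) :
    (∑ i : Fin n, if (i : ℕ) + 1 = k then f i else 0) = 0 := by
  apply Finset.sum_eq_zero
  intro i _
  rw [if_neg]
  have := i.isLt
  omega

lemma coeff_in {n : ℕ} (l : Wt n) (k : ℕ) (h1 : 1 ≤ k) (h2 : k ≤ n) :
    coeffW n l k = l ⟨k - 1, by omega⟩ := sum_pick k h1 h2 l

lemma coeff_out {n : ℕ} (l : Wt n) (k : ℕ) (h : k = 0 ∨ n < k) :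
    coeffW n l k = 0 := sum_pick_zero k h l

lemma coeff_zero {n : ℕ} (l : Wt n) : coeffW n l 0 = 0 := coeff_out l 0 (Or.inl rfl)

lemma coeff_add {n : ℕ} (a b : Wt n) (k : ℕ) :
    coeffW n (a + b) k = coeffW n a k + coeffW n b k := by
  by_cases h : 1 ≤ k ∧ k ≤ n
  · rw [coeff_in _ k h.1 h.2, coeff_in _ k h.1 h.2, coeff_in _ k h.1 h.2]; rfl
  · rw [coeff_out _ k (by omega), coeff_out _ k (by omega), coeff_out _ k (by omega)]; ring

lemma coeff_sub {n : ℕ} (a b : Wt n) (k : ℕ) :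
    coeffW n (a - b) k = coeffW n a k - coeffW n b k := by
  by_cases h : 1 ≤ k ∧ k ≤ n
  · rw [coeff_in _ k h.1 h.2, coeff_in _ k h.1 h.2, coeff_in _ k h.1 h.2]; rfl
  · rw [coeff_out _ k (by omega), coeff_out _ k (by omega), coeff_out _ k (by omega)]; ring

lemma coeff_nsmul {n : ℕ} (t : ℕ) (a : Wt n) (k : ℕ) :
    coeffW n (t • a) k = t * coeffW n a k := by
  by_cases h : 1 ≤ k ∧ k ≤ n
  · rw [coeff_in _ k h.1 h.2, coeff_in _ k h.1 h.2]
    simp [Pi.smul_apply, nsmul_eq_mul]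
  · rw [coeff_out _ k (by omega), coeff_out _ k (by omega)]; ring

lemma coeff_zsmul {n : ℕ} (t : ℤ) (a : Wt n) (k : ℕ) :
    coeffW n (t • a) k = t * coeffW n a k := by
  by_cases h : 1 ≤ k ∧ k ≤ n
  · rw [coeff_in _ k h.1 h.2, coeff_in _ k h.1 h.2]
    simp [Pi.smul_apply]
  · rw [coeff_out _ k (by omega), coeff_out _ k (by omega)]; ring

lemma coeff_finsum {n : ℕ} {ι : Type*} (s : Finset ι) (f : ι → Wt n) (k : ℕ) :
    coeffW n (∑ j ∈ s, f j) k = ∑ j ∈ s, coeffW n (f j) k := by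
  by_cases h : 1 ≤ k ∧ k ≤ n
  · rw [coeff_in _ k h.1 h.2, Finset.sum_apply]
    exact Finset.sum_congr rfl fun j _ => (coeff_in (f j) k h.1 h.2).symm
  · rw [coeff_out _ k (by omega)]
    exact (Finset.sum_eq_zero fun j _ => coeff_out (f j) k (by omega)).symm

lemma wt_ext {n : ℕ} {a b : Wt n} (h : ∀ k, 1 ≤ k → k ≤ n → coeffW n a k = coeffW n b k) :
    a = b := by
  funext i
  have hn := i.isLt
  have h2 := h ((i : ℕ) + 1) (by omega) (by omega)
  have ha := coeff_in a ((i : ℕ) + 1) (by omega) (by omega)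
  have hb := coeff_in b ((i : ℕ) + 1) (by omega) (by omega)
  rw [ha, hb] at h2
  simpa using h2

lemma coeff_omega {n : ℕ} (m k : ℕ) :
    coeffW n (omegaW n m) k = if k = m ∧ 1 ≤ k ∧ k ≤ n then 1 else 0 := by
  by_cases h : 1 ≤ k ∧ k ≤ n
  · rw [coeff_in _ k h.1 h.2]
    show (if (k - 1) + 1 = m then (1:ℤ) else 0) = _
    split_ifs <;> omega
  · rw [coeff_out _ k (by omega), if_neg (by omega)]

lemma coeff_alpha {n : ℕ} (m k : ℕ) (h1 : 1 ≤ k) (h2 : k ≤ n) :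
    coeffW n (alphaW n m) k =
      if k = m then 2 else if k + 1 = m ∨ k = m + 1 then -1 else 0 := by
  rw [coeff_in _ k h1 h2]
  show (if (k-1) + 1 = m then (2:ℤ) else if (k-1) + 2 = m ∨ (k-1) = m then -1 else 0) = _
  split_ifs <;> omega

def Sn (n : ℕ) (c : ℕ → ℕ) : Wt n := ∑ k ∈ Finset.Icc 1 n, (c k : ℤ) • alphaW n k

lemma Sn_add {n : ℕ} (c₁ c₂ : ℕ → ℕ) :
    Sn n (fun k => c₁ k + c₂ k) = Sn n c₁ + Sn n c₂ := by
  unfold Sn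
  rw [← Finset.sum_add_distrib]
  apply Finset.sum_congr rfl
  intro k _
  push_cast
  rw [add_smul]

lemma Sn_coeff {n : ℕ} (c : ℕ → ℕ) (k : ℕ) :
    coeffW n (Sn n c) k = ∑ j ∈ Finset.Icc 1 n, (c j : ℤ) * coeffW n (alphaW n j) k := by
  unfold Sn
  rw [coeff_finsum]
  exact Finset.sum_congr rfl fun j _ => coeff_zsmul _ _ _

/-- K2 : coefficient of `Sn c` at `j` vanishes when `c` vanishes near `j`. -/
lemma Sn_coeff_zero {n : ℕ} (c : ℕ → ℕ) (j : ℕ)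
    (h1 : c (j - 1) = 0) (h2 : c j = 0) (h3 : c (j + 1) = 0) :
    coeffW n (Sn n c) j = 0 := by
  by_cases hj : 1 ≤ j ∧ j ≤ n
  · rw [Sn_coeff]
    apply Finset.sum_eq_zero
    intro k hk
    simp only [Finset.mem_Icc] at hk
    by_cases hnear : k + 1 = j ∨ k = j ∨ k = j + 1
    · have hc : c k = 0 := by
        rcases hnear with h | h | h
        · have : k = j - 1 := by omega
          rw [this]; exact h1
        · rw [h]; exact h2
        · rw [h]; exact h3
      rw [hc]; push_cast; ring
    · rw [coeff_alpha k j hj.1 hj.2]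
      rw [if_neg (by omega), if_neg (by omega)]
      ring
  · rw [coeff_out _ j (by omega)]

/-- K4 : explicit coefficient of `Sn c`. -/
lemma Sn_coeff_eq {n : ℕ} (c : ℕ → ℕ) (j : ℕ) (hj1 : 1 ≤ j) (hjn : j ≤ n) :
    coeffW n (Sn n c) j =
      2 * (c j : ℤ) - (if 2 ≤ j then (c (j-1) : ℤ) else 0) - (if j < n then (c (j+1) : ℤ) else 0) := by
  rw [Sn_coeff]
  have hpt : ∀ k ∈ Finset.Icc 1 n, (c k : ℤ) * coeffW n (alphaW n k) j =
      (if k = j then 2 * (c k : ℤ) else 0) - (if k = j - 1 ∧ 2 ≤ j then (c k : ℤ) else 0)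
        - (if k = j + 1 then (c k : ℤ) else 0) := by
    intro k hk
    simp only [Finset.mem_Icc] at hk
    rw [coeff_alpha k j hj1 hjn]
    by_cases h1 : k = j
    · rw [if_pos (by omega), if_pos h1, if_neg (by omega), if_neg (by omega)]; ring
    · by_cases h2 : k = j - 1 ∧ 2 ≤ j
      · rw [if_neg (by omega), if_pos (by omega), if_neg h1, if_pos h2, if_neg (by omega)]; ring
      · by_cases h3 : k = j + 1
        · rw [if_neg (by omega), if_pos (by omega), if_neg h1, if_neg h2, if_pos h3]; ring
        · rw [if_neg (by omega), if_neg (by omega), if_neg h1, if_neg h2, if_neg h3]; ring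
  rw [Finset.sum_congr rfl hpt, Finset.sum_sub_distrib, Finset.sum_sub_distrib]
  congr 1
  congr 1
  · rw [Finset.sum_ite_eq' (Finset.Icc 1 n) j (fun k => 2 * (c k : ℤ)),
        if_pos (by simp [Finset.mem_Icc]; omega)]
  · by_cases h2 : 2 ≤ j
    · have : ∀ k ∈ Finset.Icc 1 n, (if k = j - 1 ∧ 2 ≤ j then (c k : ℤ) else 0)
          = (if k = j - 1 then (c k : ℤ) else 0) := by
        intro k _; split_ifs <;> first | rfl | omega
      rw [Finset.sum_congr rfl this,
        Finset.sum_ite_eq' (Finset.Icc 1 n) (j-1) (fun k => (c k : ℤ)),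
        if_pos (by simp [Finset.mem_Icc]; omega), if_pos h2]
    · rw [if_neg h2]
      apply Finset.sum_eq_zero
      intro k _
      rw [if_neg (by omega)]
  · rw [Finset.sum_ite_eq' (Finset.Icc 1 n) (j+1) (fun k => (c k : ℤ))]
    simp only [Finset.mem_Icc]
    split_ifs <;> first | rfl | omega

/-- coefficient of the indicator combination. -/
lemma Sn_ind_coeff {n : ℕ} (m p k : ℕ) (h1m : 1 ≤ m) (hmp : m < p) (hpn : p ≤ n) :
    coeffW n (Sn n (fun k => if m ≤ k ∧ k ≤ p then 1 else 0)) k =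
      if k + 1 = m ∧ 1 ≤ k then -1 else if k = m ∨ k = p then 1
        else if k = p + 1 ∧ k ≤ n then -1 else 0 := by
  by_cases hk : 1 ≤ k ∧ k ≤ n
  · rw [Sn_coeff_eq _ k hk.1 hk.2]
    simp only [Nat.cast_ite, Nat.cast_one, Nat.cast_zero]
    split_ifs <;> omega
  · rw [coeff_out _ k (by omega)]
    split_ifs <;> omega

lemma alphaSum_eq {n : ℕ} (m p : ℕ) (h1m : 1 ≤ m) (hpn : p ≤ n) :
    alphaSumW n m p = Sn n (fun k => if m ≤ k ∧ k ≤ p then 1 else 0) := by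
  have hsub : Finset.Icc m p ⊆ Finset.Icc 1 n := Finset.Icc_subset_Icc h1m hpn
  have e1 : alphaSumW n m p
      = ∑ k ∈ Finset.Icc m p, (Nat.cast (if m ≤ k ∧ k ≤ p then 1 else 0) : ℤ) • alphaW n k := by
    apply Finset.sum_congr rfl
    intro k hk
    simp only [Finset.mem_Icc] at hk
    rw [if_pos (by omega), Nat.cast_one, one_smul]
  have e2 : (∑ k ∈ Finset.Icc m p, (Nat.cast (if m ≤ k ∧ k ≤ p then 1 else 0) : ℤ) • alphaW n k)
      = ∑ k ∈ Finset.Icc 1 n, (Nat.cast (if m ≤ k ∧ k ≤ p then 1 else 0) : ℤ) • alphaW n k := by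
    apply Finset.sum_subset hsub
    intro k hk hk2
    simp only [Finset.mem_Icc] at hk hk2
    rw [if_neg (by omega), Nat.cast_zero, zero_smul]
  rw [e1, e2]; rfl

lemma alpha_eq {n : ℕ} (q : ℕ) (h1 : 1 ≤ q) (h2 : q ≤ n) :
    alphaW n q = Sn n (fun k => if k = q then 1 else 0) := by
  have this1 : ∀ k ∈ Finset.Icc 1 n, (Nat.cast (if k = q then 1 else 0) : ℤ) • alphaW n k
      = if k = q then alphaW n k else 0 := by
    intro k _
    split_ifs <;> simp
  have e1 : Sn n (fun k => if k = q then 1 else 0)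
      = ∑ k ∈ Finset.Icc 1 n, if k = q then alphaW n k else 0 :=
    Finset.sum_congr rfl this1
  rw [e1, Finset.sum_ite_eq' (Finset.Icc 1 n) q (fun k => alphaW n k),
    if_pos (by simp [Finset.mem_Icc]; omega)]

lemma coeff_nonneg {n : ℕ} {l : Wt n} (hd : IsDom n l) (k : ℕ) : 0 ≤ coeffW n l k := by
  by_cases h : 1 ≤ k ∧ k ≤ n
  · rw [coeff_in _ k h.1 h.2]; exact hd _
  · rw [coeff_out _ k (by omega)]

lemma coeff_le_one {n : ℕ} {l : Wt n} (hd : IsDomOne n l) (k : ℕ) : coeffW n l k ≤ 1 := by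
  by_cases h : 1 ≤ k ∧ k ≤ n
  · rw [coeff_in _ k h.1 h.2]; exact (hd _).2
  · rw [coeff_out _ k (by omega)]; omega

lemma domone_dom {n : ℕ} {l : Wt n} (hd : IsDomOne n l) : IsDom n l := fun i => (hd i).1

lemma domone_of_coeff {n : ℕ} {l : Wt n}
    (h : ∀ k, 1 ≤ k → k ≤ n → 0 ≤ coeffW n l k ∧ coeffW n l k ≤ 1) : IsDomOne n l := by
  intro i
  have hn := i.isLt
  have h2 := h ((i : ℕ) + 1) (by omega) (by omega)
  rw [coeff_in _ _ (by omega) (by omega)] at h2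
  simpa using h2

lemma min_pos {n : ℕ} {l : Wt n} {m : ℕ} (hm : IsMinIdx n l m) : 1 ≤ m := by
  rcases Nat.eq_zero_or_pos m with h | h
  · exfalso; have := hm.1; rw [h, coeff_zero] at this; omega
  · exact h

lemma min_le_n {n : ℕ} {l : Wt n} {m : ℕ} (hm : IsMinIdx n l m) : m ≤ n := by
  by_contra h
  have := hm.1
  rw [coeff_out _ m (by omega)] at this
  omega

lemma min_unique {n : ℕ} {l : Wt n} {m m' : ℕ} (h : IsMinIdx n l m) (h' : IsMinIdx n l m') :
    m = m' := by
  rcases lt_trichotomy m m' with hlt | he | hlt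
  · exfalso; have := h'.2 m hlt; have := h.1; omega
  · exact he
  · exfalso; have := h.2 m' hlt; have := h'.1; omega

lemma exists_min {n : ℕ} {l : Wt n} (hd : IsDom n l) (hht : 0 < htW n l) :
    ∃ m, IsMinIdx n l m := by
  classical
  have hex : ∃ k, 0 < coeffW n l k := by
    by_contra hc
    push_neg at hc
    have hall : ∀ i : Fin n, l i ≤ 0 := by
      intro i
      have hn := i.isLt
      have := hc ((i : ℕ) + 1)
      rw [coeff_in _ _ (by omega) (by omega)] at this
      simpa using this
    have : htW n l ≤ 0 := Finset.sum_nonpos (fun i _ => hall i)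
    omega
  refine ⟨Nat.find hex, Nat.find_spec hex, fun k hk => ?_⟩
  have h1 := Nat.find_min hex hk
  have h2 := coeff_nonneg hd k
  omega

lemma sub_omega_coeff {n : ℕ} {l : Wt n} {m : ℕ} (hl : IsDomOne n l) (hm : IsMinIdx n l m) :
    (∀ k, k ≤ m → coeffW n (l - omegaW n m) k = 0) ∧
    (∀ k, m < k → coeffW n (l - omegaW n m) k = coeffW n l k) := by
  have h1m := min_pos hm
  have hmn := min_le_n hm
  have hlm : coeffW n l m = 1 := by
    have := hm.1; have := coeff_le_one hl m; omega
  constructor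
  · intro k hk
    rw [coeff_sub, coeff_omega]
    rcases Nat.lt_or_ge k m with h | h
    · rw [hm.2 k h, if_neg (by omega)]; ring
    · have : k = m := by omega
      rw [this, hlm, if_pos (by omega)]; ring
  · intro k hk
    rw [coeff_sub, coeff_omega, if_neg (by omega)]; ring

lemma sub_omega_domone {n : ℕ} {l : Wt n} {m : ℕ} (hl : IsDomOne n l) (hm : IsMinIdx n l m) :
    IsDomOne n (l - omegaW n m) := by
  obtain ⟨hlow, hhigh⟩ := sub_omega_coeff hl hm
  apply domone_of_coeff
  intro k hk1 hk2
  rcases Nat.lt_or_ge m k with h | h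
  · rw [hhigh k h]
    exact ⟨coeff_nonneg (domone_dom hl) k, coeff_le_one hl k⟩
  · rw [hlow k h]; omega

lemma ht_omega {n : ℕ} {m : ℕ} (h1 : 1 ≤ m) (h2 : m ≤ n) : htW n (omegaW n m) = 1 := by
  unfold htW omegaW
  rw [sum_pick m h1 h2 (fun _ => 1)]

lemma ht_sub {n : ℕ} (a b : Wt n) : htW n (a - b) = htW n a - htW n b := by
  unfold htW
  rw [← Finset.sum_sub_distrib]
  rfl

/-- the coefficient profile of `l` given min `m` and second min `p`. -/
lemma coeff_profile {n : ℕ} {l : Wt n} {m p : ℕ} (hl : IsDomOne n l)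
    (hm : IsMinIdx n l m) (hp : IsMinIdx n (l - omegaW n m) p) :
    m < p ∧ 1 ≤ m ∧ p ≤ n ∧ coeffW n l m = 1 ∧ coeffW n l p = 1 ∧
    (∀ k, k < m → coeffW n l k = 0) ∧ (∀ k, m < k → k < p → coeffW n l k = 0) := by
  obtain ⟨hlow, hhigh⟩ := sub_omega_coeff hl hm
  have h1m := min_pos hm
  have hpn := min_le_n hp
  have hmp : m < p := by
    by_contra h
    have := hlow p (by omega)
    have := hp.1
    omega
  have hlm : coeffW n l m = 1 := by have := hm.1; have := coeff_le_one hl m; omega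
  have hlp : coeffW n l p = 1 := by
    have h2 := hhigh p hmp
    have := hp.1
    have := coeff_le_one hl p
    omega
  refine ⟨hmp, h1m, hpn, hlm, hlp, fun k hk => hm.2 k hk, fun k hk1 hk2 => ?_⟩
  have := hp.2 k hk2
  rw [hhigh k hk1] at this
  exact this

def MA (n : ℕ) (s : ℕ) (l mu : Wt n) : Prop :=
  IsDomOne n l →
    (s = 0 → mu = l) ∧
    (0 < s → ∃ m, IsMinIdx n l m) ∧
    ∀ m, IsMinIdx n l m →
      (∀ k, k < m → coeffW n mu k = 0) ∧
      ∃ c : ℕ → ℕ, (∀ k, (∀ j, m < j → j ≤ k → coeffW n l j = 0) → c k = 0) ∧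
        l - mu = Sn n c

def MB (n : ℕ) (s : ℕ) (l mu : Wt n) : Prop :=
  IsDomOne n l →
    ∀ m, IsMinIdx n l m →
      (∀ k, k + 1 < m → coeffW n mu k = 0) ∧ coeffW n mu (m - 1) ≤ 1 ∧
      ∃ c : ℕ → ℕ, (∀ k, k < m → c k = 0) ∧ l - mu = Sn n c


lemma Sn_zero {n : ℕ} : Sn n (fun _ => 0) = 0 := by
  unfold Sn
  apply Finset.sum_eq_zero
  intro k _
  rw [Nat.cast_zero, zero_smul]

/-- coefficients of l' = l - α_{m,p}. -/
lemma lprime_coeff {n : ℕ} {l : Wt n} {m p : ℕ} (hl : IsDomOne n l)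
    (hm : IsMinIdx n l m) (hp : IsMinIdx n (l - omegaW n m) p) :
    (∀ k, k + 1 < m → coeffW n (l - alphaSumW n m p) k = 0) ∧
    (2 ≤ m → coeffW n (l - alphaSumW n m p) (m - 1) = 1) ∧
    (∀ k, m ≤ k → k ≤ p → coeffW n (l - alphaSumW n m p) k = 0) ∧
    (p + 1 ≤ n → coeffW n (l - alphaSumW n m p) (p + 1) = coeffW n l (p + 1) + 1) ∧
    (∀ k, p + 1 < k → coeffW n (l - alphaSumW n m p) k = coeffW n l k) := by
  obtain ⟨hmp, h1m, hpn, hlm, hlp, hbelow, hmid⟩ := coeff_profile hl hm hp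
  have hco : ∀ k, coeffW n (l - alphaSumW n m p) k =
      coeffW n l k - coeffW n (Sn n (fun k => if m ≤ k ∧ k ≤ p then 1 else 0)) k := by
    intro k
    rw [alphaSum_eq m p h1m hpn, coeff_sub]
  have hSI := fun k => Sn_ind_coeff m p k h1m hmp hpn
  refine ⟨?_, ?_, ?_, ?_, ?_⟩
  · intro k hk
    rw [hco, hSI, hbelow k (by omega)]
    split_ifs <;> omega
  · intro h2
    rw [hco, hSI, hbelow (m-1) (by omega)]
    split_ifs <;> omega
  · intro k hk1 hk2
    rw [hco, hSI]
    rcases Nat.eq_or_lt_of_le hk1 with he | hlt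
    · rw [← he, hlm]; split_ifs <;> omega
    · rcases Nat.eq_or_lt_of_le hk2 with he | hlt2
      · rw [he, hlp]; split_ifs <;> omega
      · rw [hmid k hlt hlt2]; split_ifs <;> omega
  · intro hn
    rw [hco, hSI]
    split_ifs <;> omega
  · intro k hk
    rw [hco, hSI]
    split_ifs <;> omega

/-- coefficients of l'' = l - 2ω_{p+1} - α_{m,p}. -/
lemma ldp_coeff {n : ℕ} {l : Wt n} {m p : ℕ} (hl : IsDomOne n l)
    (hm : IsMinIdx n l m) (hp : IsMinIdx n (l - omegaW n m) p)
    (h1 : coeffW n l (p + 1) = 1) :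
    (∀ k, k + 1 < m → coeffW n (l - 2 • omegaW n (p + 1) - alphaSumW n m p) k = 0) ∧
    (2 ≤ m → coeffW n (l - 2 • omegaW n (p + 1) - alphaSumW n m p) (m - 1) = 1) ∧
    (∀ k, m ≤ k → k ≤ p + 1 → coeffW n (l - 2 • omegaW n (p + 1) - alphaSumW n m p) k = 0) ∧
    (∀ k, p + 1 < k → coeffW n (l - 2 • omegaW n (p + 1) - alphaSumW n m p) k = coeffW n l k) := by
  obtain ⟨hmp, h1m, hpn, hlm, hlp, hbelow, hmid⟩ := coeff_profile hl hm hp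
  have hp1n : p + 1 ≤ n := by
    by_contra h
    rw [coeff_out _ _ (by omega)] at h1
    omega
  have hco : ∀ k, coeffW n (l - 2 • omegaW n (p + 1) - alphaSumW n m p) k =
      coeffW n l k - 2 * coeffW n (omegaW n (p+1)) k
        - coeffW n (Sn n (fun k => if m ≤ k ∧ k ≤ p then 1 else 0)) k := by
    intro k
    rw [alphaSum_eq m p h1m hpn, coeff_sub, coeff_sub, coeff_nsmul]
    push_cast
    ring
  have hSI := fun k => Sn_ind_coeff m p k h1m hmp hpn
  refine ⟨?_, ?_, ?_, ?_⟩
  · intro k hk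
    rw [hco, hSI, hbelow k (by omega), coeff_omega]
    split_ifs <;> omega
  · intro h2
    rw [hco, hSI, hbelow (m-1) (by omega), coeff_omega]
    split_ifs <;> omega
  · intro k hk1 hk2
    rw [hco, hSI, coeff_omega]
    rcases Nat.lt_or_ge k (p+1) with hlt2 | hge
    · rcases Nat.eq_or_lt_of_le hk1 with he | hlt
      · rw [← he, hlm]; split_ifs <;> omega
      · rcases Nat.lt_or_ge k p with h' | h''
        · rw [hmid k hlt h']; split_ifs <;> omega
        · have : k = p := by omega
          rw [this, hlp]; split_ifs <;> omega
    · have : k = p + 1 := by omega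
      rw [this, h1]; split_ifs <;> omega
  · intro k hk
    rw [hco, hSI, coeff_omega]
    split_ifs <;> omega

lemma L_base {n : ℕ} (l : Wt n) : MA n 0 l l := by
  intro _
  refine ⟨fun _ => rfl, fun h => absurd h (by omega), fun m hm => ⟨hm.2, fun _ => 0, fun k _ => rfl, ?_⟩⟩
  rw [sub_self, Sn_zero]

lemma L_step0 {n : ℕ} {s m : ℕ} {l mu : Wt n} (hs : 0 < s) (hht : 2 ≤ htW n l)
    (hm : IsMinIdx n l m) (IH : MA n s (l - omegaW n m) mu) :
    MA n s l (omegaW n m + mu) := by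
  intro hl
  have hd2 : IsDomOne n (l - omegaW n m) := sub_omega_domone hl hm
  have h1m := min_pos hm
  have hmn := min_le_n hm
  have hht2 : 0 < htW n (l - omegaW n m) := by
    rw [ht_sub, ht_omega h1m hmn]; omega
  obtain ⟨p, hp⟩ := exists_min (domone_dom hd2) hht2
  obtain ⟨hlow, hhigh⟩ := sub_omega_coeff hl hm
  have hmp : m < p := by
    by_contra hc
    have := hlow p (by omega); have := hp.1; omega
  obtain ⟨hi2, c2, hvan2, heq2⟩ := (IH hd2).2.2 p hp
  refine ⟨fun h0 => absurd h0 (by omega), fun _ => ⟨m, hm⟩, ?_⟩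
  intro m0 hm0
  obtain rfl : m = m0 := (min_unique hm0 hm).symm
  refine ⟨?_, c2, ?_, ?_⟩
  · intro k hk
    rw [coeff_add, coeff_omega, if_neg (by omega), hi2 k (by omega)]; ring
  · intro k hvk
    apply hvan2
    intro j hj1 hj2
    rw [hhigh j (by omega)]
    exact hvk j (by omega) hj2
  · rw [sub_add_eq_sub_sub]; exact heq2

lemma L_step1 {n : ℕ} {s m : ℕ} {l mu : Wt n} (hs : 0 < s) (hht : 2 ≤ htW n l)
    (hm : IsMinIdx n l m) (IH : MB n s (l - omegaW n m) mu) :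
    MA n s l (omegaW n m + mu) := by
  intro hl
  have hd2 : IsDomOne n (l - omegaW n m) := sub_omega_domone hl hm
  have h1m := min_pos hm
  have hmn := min_le_n hm
  have hht2 : 0 < htW n (l - omegaW n m) := by
    rw [ht_sub, ht_omega h1m hmn]; omega
  obtain ⟨p, hp⟩ := exists_min (domone_dom hd2) hht2
  obtain ⟨hlow, hhigh⟩ := sub_omega_coeff hl hm
  have hmp : m < p := by
    by_contra hc
    have := hlow p (by omega); have := hp.1; omega
  obtain ⟨hi2, hle2, c2, hvan2, heq2⟩ := (IH hd2) p hp
  refine ⟨fun h0 => absurd h0 (by omega), fun _ => ⟨m, hm⟩, ?_⟩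
  intro m0 hm0
  obtain rfl : m = m0 := (min_unique hm0 hm).symm
  refine ⟨?_, c2, ?_, ?_⟩
  · intro k hk
    rw [coeff_add, coeff_omega, if_neg (by omega), hi2 k (by omega)]; ring
  · intro k hvk
    apply hvan2
    by_contra hc
    have h3 := hvk p hmp (by omega)
    rw [← hhigh p hmp] at h3
    have := hp.1
    omega
  · rw [sub_add_eq_sub_sub]; exact heq2

lemma L_caseA {n : ℕ} {s m p : ℕ} {l mu : Wt n} (hht : 2 ≤ htW n l)
    (hm : IsMinIdx n l m) (hp : IsMinIdx n (l - omegaW n m) p)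
    (h0 : coeffW n l (p + 1) = 0) (IH : MA n s (l - alphaSumW n m p) mu) :
    MB n (s + 1) l mu := by
  intro hl
  obtain ⟨hmp, h1m, hpn, hlm, hlp, hbelow, hmid⟩ := coeff_profile hl hm hp
  obtain ⟨pc0, pcm1, pcmid, pcp1, pchigh⟩ := lprime_coeff hl hm hp
  have hd' : IsDomOne n (l - alphaSumW n m p) := by
    apply domone_of_coeff
    intro k hk1 hk2
    rcases Nat.lt_or_ge (p+1) k with hgt | hle
    · rw [pchigh k hgt]
      exact ⟨coeff_nonneg (domone_dom hl) k, coeff_le_one hl k⟩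
    · rcases Nat.lt_or_ge k m with hlt | hge
      · rcases Nat.lt_or_ge (k+1) m with hlt2 | hge2
        · rw [pc0 k hlt2]; omega
        · have hk' : k = m - 1 := by omega
          rw [hk', pcm1 (by omega)]; omega
      · rcases Nat.lt_or_ge p k with hpk | hkp
        · have hk' : k = p + 1 := by omega
          rw [hk', pcp1 (by omega), h0]; omega
        · rw [pcmid k hge hkp]; omega
  have hSum : alphaSumW n m p = Sn n (fun k => if m ≤ k ∧ k ≤ p then 1 else 0) :=
    alphaSum_eq m p h1m hpn
  intro m0 hm0
  obtain rfl : m = m0 := (min_unique hm0 hm).symm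
  rcases Nat.lt_or_ge m 2 with hm2 | hm2
  · -- m = 1
    have hm1 : m = 1 := by omega
    rcases Nat.lt_or_ge n (p+1) with hpn2 | hpn2
    · -- p = n : l' = 0
      have hz : ∀ k, coeffW n (l - alphaSumW n m p) k = 0 := by
        intro k
        rcases Nat.eq_zero_or_pos k with rfl | hk1
        · exact coeff_zero _
        · rcases Nat.lt_or_ge p k with h' | h''
          · exact coeff_out _ k (by omega)
          · exact pcmid k (by omega) h''
      rcases Nat.eq_zero_or_pos s with rfl | hs
      · have hmu0 : mu = l - alphaSumW n m p := (IH hd').1 rfl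
        refine ⟨fun k hk => absurd hk (by omega), ?_, ?_⟩
        · have hz0 : coeffW n mu (m-1) = 0 := by rw [hm1]; exact coeff_zero mu
          omega
        · refine ⟨fun k => if m ≤ k ∧ k ≤ p then 1 else 0, fun k hk => if_neg (by omega), ?_⟩
          rw [hmu0, ← hSum]
          abel
      · obtain ⟨m2, hm2'⟩ := (IH hd').2.1 hs
        have h6 := hm2'.1
        rw [hz m2] at h6
        omega
    · -- p + 1 ≤ n
      have hmin' : IsMinIdx n (l - alphaSumW n m p) (p+1) := by
        constructor
        · rw [pcp1 hpn2, h0]; omega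
        · intro k hk
          rcases Nat.eq_zero_or_pos k with rfl | hk1
          · exact coeff_zero _
          · exact pcmid k (by omega) (by omega)
      obtain ⟨hi', c', hvan', heq'⟩ := (IH hd').2.2 (p+1) hmin'
      refine ⟨fun k hk => absurd hk (by omega), ?_, ?_⟩
      · have hz0 : coeffW n mu (m-1) = 0 := by rw [hm1]; exact coeff_zero mu
        omega
      · refine ⟨fun k => (if m ≤ k ∧ k ≤ p then 1 else 0) + c' k, ?_, ?_⟩
        · intro k hk
          have hk0 : k = 0 := by omega
          have hc'0 : c' 0 = 0 := hvan' 0 (by intro j hj1 hj2; exact absurd hj2 (by omega))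
          show (if m ≤ k ∧ k ≤ p then 1 else 0) + c' k = 0
          rw [hk0, if_neg (by omega), hc'0]
        · have eA := Sn_add (n := n) (fun k => if m ≤ k ∧ k ≤ p then (1:ℕ) else 0) c'
          calc l - mu = (l - alphaSumW n m p - mu) + alphaSumW n m p := by abel
            _ = Sn n c' + Sn n (fun k => if m ≤ k ∧ k ≤ p then 1 else 0) := by rw [heq', hSum]
            _ = _ := by rw [eA]; exact add_comm _ _
  · -- m ≥ 2
    have hmin' : IsMinIdx n (l - alphaSumW n m p) (m - 1) := by
      constructor
      · rw [pcm1 hm2]; omega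
      · intro k hk
        rcases Nat.eq_zero_or_pos k with rfl | hk1
        · exact coeff_zero _
        · exact pc0 k (by omega)
    obtain ⟨hi', c', hvan', heq'⟩ := (IH hd').2.2 (m-1) hmin'
    have hc's : ∀ k, k ≤ p → c' k = 0 := by
      intro k hk
      apply hvan'
      intro j hj1 hj2
      exact pcmid j (by omega) (by omega)
    have hmu : ∀ k, coeffW n mu k =
        coeffW n (l - alphaSumW n m p) k - coeffW n (Sn n c') k := by
      intro k
      have h5 : coeffW n (l - alphaSumW n m p - mu) k = coeffW n (Sn n c') k := by rw [heq']
      rw [coeff_sub] at h5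
      omega
    refine ⟨?_, ?_, ?_⟩
    · intro k hk
      exact hi' k (by omega)
    · have hz := Sn_coeff_zero (n := n) c' (m-1) (hc's _ (by omega)) (hc's _ (by omega))
        (hc's _ (by omega))
      rw [hmu, pcm1 hm2, hz]
      omega
    · refine ⟨fun k => (if m ≤ k ∧ k ≤ p then 1 else 0) + c' k, ?_, ?_⟩
      · intro k hk
        show (if m ≤ k ∧ k ≤ p then 1 else 0) + c' k = 0
        rw [if_neg (by omega), hc's k (by omega)]
      · have eA := Sn_add (n := n) (fun k => if m ≤ k ∧ k ≤ p then (1:ℕ) else 0) c'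
        calc l - mu = (l - alphaSumW n m p - mu) + alphaSumW n m p := by abel
          _ = Sn n c' + Sn n (fun k => if m ≤ k ∧ k ≤ p then 1 else 0) := by rw [heq', hSum]
          _ = _ := by rw [eA]; exact add_comm _ _

lemma L_caseB1 {n : ℕ} {m p : ℕ} {l : Wt n} (hht : 2 ≤ htW n l)
    (hm : IsMinIdx n l m) (hp : IsMinIdx n (l - omegaW n m) p)
    (h1 : coeffW n l (p + 1) = 1) :
    MB n 1 l (l - alphaSumW n m p) := by
  intro hl
  obtain ⟨hmp, h1m, hpn, hlm, hlp, hbelow, hmid⟩ := coeff_profile hl hm hp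
  obtain ⟨pc0, pcm1, pcmid, pcp1, pchigh⟩ := lprime_coeff hl hm hp
  intro m0 hm0
  obtain rfl : m = m0 := (min_unique hm0 hm).symm
  refine ⟨fun k hk => pc0 k hk, ?_, ?_⟩
  · rcases Nat.lt_or_ge m 2 with hm2 | hm2
    · have hz0 : coeffW n (l - alphaSumW n m p) (m-1) = 0 := by
        have hm1 : m = 1 := by omega
        rw [hm1]; exact coeff_zero _
      omega
    · rw [pcm1 hm2]
  · refine ⟨fun k => if m ≤ k ∧ k ≤ p then 1 else 0, fun k hk => if_neg (by omega), ?_⟩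
    rw [← alphaSum_eq m p h1m hpn]
    abel

lemma L_caseB2 {n : ℕ} {s m p : ℕ} {l mu : Wt n} (hht : 2 ≤ htW n l)
    (hm : IsMinIdx n l m) (hp : IsMinIdx n (l - omegaW n m) p)
    (h1 : coeffW n l (p + 1) = 1)
    (IH : MA n (s + 1) (l - 2 • omegaW n (p + 1) - alphaSumW n m p) mu) :
    MB n (s + 2) l (2 • omegaW n (p + 1) + mu) := by
  intro hl
  obtain ⟨hmp, h1m, hpn, hlm, hlp, hbelow, hmid⟩ := coeff_profile hl hm hp
  have hp1n : p + 1 ≤ n := by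
    by_contra hc; rw [coeff_out _ _ (by omega)] at h1; omega
  obtain ⟨qc0, qcm1, qcmid, qchigh⟩ := ldp_coeff hl hm hp h1
  have hd2 : IsDomOne n (l - 2 • omegaW n (p + 1) - alphaSumW n m p) := by
    apply domone_of_coeff
    intro k hk1 hk2
    rcases Nat.lt_or_ge (p+1) k with hgt | hle
    · rw [qchigh k hgt]; exact ⟨coeff_nonneg (domone_dom hl) k, coeff_le_one hl k⟩
    · rcases Nat.lt_or_ge k m with hlt | hge
      · rcases Nat.lt_or_ge (k+1) m with hlt2 | hge2
        · rw [qc0 k hlt2]; omega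
        · have hk' : k = m - 1 := by omega
          rw [hk', qcm1 (by omega)]; omega
      · rw [qcmid k hge hle]; omega
  have hSum : alphaSumW n m p = Sn n (fun k => if m ≤ k ∧ k ≤ p then 1 else 0) :=
    alphaSum_eq m p h1m hpn
  intro m0 hm0
  obtain rfl : m = m0 := (min_unique hm0 hm).symm
  have homega : ∀ k, k ≤ m - 1 → coeffW n (2 • omegaW n (p+1)) k = 0 := by
    intro k hk
    rw [coeff_nsmul, coeff_omega, if_neg (by omega)]; ring
  have heqn : l - (2 • omegaW n (p+1) + mu) =
      (l - 2 • omegaW n (p + 1) - alphaSumW n m p - mu) + alphaSumW n m p := by abel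
  rcases Nat.lt_or_ge m 2 with hm2 | hm2
  · -- m = 1
    have hm1 : m = 1 := by omega
    obtain ⟨m2, hm2'⟩ := (IH hd2).2.1 (by omega)
    obtain ⟨hi2, c2, hvan2, heq2⟩ := (IH hd2).2.2 m2 hm2'
    have hc20 : c2 0 = 0 := hvan2 0 (by intro j hj1 hj2; exact absurd hj2 (by omega))
    refine ⟨fun k hk => absurd hk (by omega), ?_, ?_⟩
    · have hz0 : coeffW n (2 • omegaW n (p+1) + mu) (m-1) = 0 := by
        rw [hm1]; exact coeff_zero _
      omega
    · refine ⟨fun k => (if m ≤ k ∧ k ≤ p then 1 else 0) + c2 k, ?_, ?_⟩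
      · intro k hk
        have hk0 : k = 0 := by omega
        show (if m ≤ k ∧ k ≤ p then 1 else 0) + c2 k = 0
        rw [hk0, if_neg (by omega), hc20]
      · have e2 : l - (2 • omegaW n (p+1) + mu) =
            Sn n (fun k => if m ≤ k ∧ k ≤ p then 1 else 0) + Sn n c2 := by
          rw [heqn, heq2, hSum]
          exact add_comm _ _
        exact e2.trans (Sn_add _ _).symm
  · -- m ≥ 2
    have hmin2 : IsMinIdx n (l - 2 • omegaW n (p + 1) - alphaSumW n m p) (m-1) := by
      constructor
      · rw [qcm1 hm2]; omega
      · intro k hk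
        rcases Nat.eq_zero_or_pos k with rfl | hk1
        · exact coeff_zero _
        · exact qc0 k (by omega)
    obtain ⟨hi2, c2, hvan2, heq2⟩ := (IH hd2).2.2 (m-1) hmin2
    have hc2s : ∀ k, k ≤ p + 1 → c2 k = 0 := by
      intro k hk
      apply hvan2
      intro j hj1 hj2
      exact qcmid j (by omega) (by omega)
    have hmu2 : ∀ k, coeffW n mu k =
        coeffW n (l - 2 • omegaW n (p + 1) - alphaSumW n m p) k - coeffW n (Sn n c2) k := by
      intro k
      have h5 : coeffW n (l - 2 • omegaW n (p + 1) - alphaSumW n m p - mu) k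
          = coeffW n (Sn n c2) k := by rw [heq2]
      simp only [coeff_sub] at h5 ⊢
      omega
    refine ⟨?_, ?_, ?_⟩
    · intro k hk
      rw [coeff_add, homega k (by omega), hi2 k (by omega)]; ring
    · have hz := Sn_coeff_zero (n := n) c2 (m-1) (hc2s _ (by omega)) (hc2s _ (by omega))
        (hc2s _ (by omega))
      rw [coeff_add, homega (m-1) (by omega), hmu2, hz]
      have h7 := qcm1 hm2
      simp only [coeff_sub] at h7 ⊢
      omega
    · refine ⟨fun k => (if m ≤ k ∧ k ≤ p then 1 else 0) + c2 k, ?_, ?_⟩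
      · intro k hk
        show (if m ≤ k ∧ k ≤ p then 1 else 0) + c2 k = 0
        rw [if_neg (by omega), hc2s k (by omega)]
      · have e2 : l - (2 • omegaW n (p+1) + mu) =
            Sn n (fun k => if m ≤ k ∧ k ≤ p then 1 else 0) + Sn n c2 := by
          rw [heqn, heq2, hSum]
          exact add_comm _ _
        exact e2.trans (Sn_add _ _).symm

lemma L_caseB3 {n : ℕ} {s m p : ℕ} {l mu : Wt n} (hht : 2 ≤ htW n l)
    (hm : IsMinIdx n l m) (hp : IsMinIdx n (l - omegaW n m) p)
    (h1 : coeffW n l (p + 1) = 1)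
    (IH : MA n s (l - 2 • omegaW n (p + 1) - alphaSumW n m p) mu) :
    MB n (s + 2) l (2 • omegaW n (p + 1) - alphaW n (p + 1) + mu) := by
  intro hl
  obtain ⟨hmp, h1m, hpn, hlm, hlp, hbelow, hmid⟩ := coeff_profile hl hm hp
  have hp1n : p + 1 ≤ n := by
    by_contra hc; rw [coeff_out _ _ (by omega)] at h1; omega
  obtain ⟨qc0, qcm1, qcmid, qchigh⟩ := ldp_coeff hl hm hp h1
  have hd2 : IsDomOne n (l - 2 • omegaW n (p + 1) - alphaSumW n m p) := by
    apply domone_of_coeff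
    intro k hk1 hk2
    rcases Nat.lt_or_ge (p+1) k with hgt | hle
    · rw [qchigh k hgt]; exact ⟨coeff_nonneg (domone_dom hl) k, coeff_le_one hl k⟩
    · rcases Nat.lt_or_ge k m with hlt | hge
      · rcases Nat.lt_or_ge (k+1) m with hlt2 | hge2
        · rw [qc0 k hlt2]; omega
        · have hk' : k = m - 1 := by omega
          rw [hk', qcm1 (by omega)]; omega
      · rw [qcmid k hge hle]; omega
  have hSum : alphaSumW n m p = Sn n (fun k => if m ≤ k ∧ k ≤ p then 1 else 0) :=
    alphaSum_eq m p h1m hpn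
  intro m0 hm0
  obtain rfl : m = m0 := (min_unique hm0 hm).symm
  have homega3 : ∀ k, k ≤ m - 1 → coeffW n (2 • omegaW n (p+1) - alphaW n (p+1)) k = 0 := by
    intro k hk
    rcases Nat.eq_zero_or_pos k with rfl | hk1
    · exact coeff_zero _
    · rw [coeff_sub, coeff_nsmul, coeff_omega, coeff_alpha (p+1) k (by omega) (by omega)]
      split_ifs <;> omega
  have heqn : l - (2 • omegaW n (p+1) - alphaW n (p+1) + mu) =
      (l - 2 • omegaW n (p + 1) - alphaSumW n m p - mu) + alphaSumW n m p + alphaW n (p+1) := by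
    abel
  have eCalc : ∀ c2 : ℕ → ℕ, (l - 2 • omegaW n (p + 1) - alphaSumW n m p - mu = Sn n c2) →
      l - (2 • omegaW n (p+1) - alphaW n (p+1) + mu) =
        Sn n (fun k => ((if m ≤ k ∧ k ≤ p then 1 else 0) + (if k = p + 1 then 1 else 0)) + c2 k) := by
    intro c2 heq2
    have eA := Sn_add (n := n)
      (fun k => (if m ≤ k ∧ k ≤ p then (1:ℕ) else 0) + (if k = p + 1 then 1 else 0)) c2
    have eB := Sn_add (n := n) (fun k => if m ≤ k ∧ k ≤ p then (1:ℕ) else 0)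
      (fun k => if k = p + 1 then 1 else 0)
    calc l - (2 • omegaW n (p+1) - alphaW n (p+1) + mu)
        = (l - 2 • omegaW n (p + 1) - alphaSumW n m p - mu) + alphaSumW n m p
            + alphaW n (p+1) := heqn
      _ = Sn n c2 + Sn n (fun k => if m ≤ k ∧ k ≤ p then 1 else 0)
            + Sn n (fun k => if k = p + 1 then 1 else 0) := by
          rw [heq2, hSum, alpha_eq (p+1) (by omega) hp1n]
      _ = _ := by rw [eA, eB]; abel
  rcases Nat.lt_or_ge m 2 with hm2 | hm2
  · -- m = 1
    have hm1 : m = 1 := by omega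
    have hkey : ∃ c2 : ℕ → ℕ, c2 0 = 0 ∧
        l - 2 • omegaW n (p + 1) - alphaSumW n m p - mu = Sn n c2 := by
      rcases Nat.eq_zero_or_pos s with rfl | hs
      · refine ⟨fun _ => 0, rfl, ?_⟩
        rw [(IH hd2).1 rfl, Sn_zero]
        exact sub_self _
      · obtain ⟨m2, hm2'⟩ := (IH hd2).2.1 hs
        obtain ⟨hi2, c2, hvan2, heq2⟩ := (IH hd2).2.2 m2 hm2'
        exact ⟨c2, hvan2 0 (by intro j hj1 hj2; exact absurd hj2 (by omega)), heq2⟩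
    obtain ⟨c2, hc20, heq2⟩ := hkey
    refine ⟨fun k hk => absurd hk (by omega), ?_, ?_⟩
    · have hz0 : coeffW n (2 • omegaW n (p+1) - alphaW n (p+1) + mu) (m-1) = 0 := by
        rw [hm1]; exact coeff_zero _
      omega
    · refine ⟨fun k => ((if m ≤ k ∧ k ≤ p then 1 else 0) + (if k = p + 1 then 1 else 0)) + c2 k,
        ?_, eCalc c2 heq2⟩
      intro k hk
      have hk0 : k = 0 := by omega
      show ((if m ≤ k ∧ k ≤ p then 1 else 0) + (if k = p + 1 then 1 else 0)) + c2 k = 0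
      rw [hk0, if_neg (by omega), if_neg (by omega), hc20]
  · -- m ≥ 2
    have hmin2 : IsMinIdx n (l - 2 • omegaW n (p + 1) - alphaSumW n m p) (m-1) := by
      constructor
      · rw [qcm1 hm2]; omega
      · intro k hk
        rcases Nat.eq_zero_or_pos k with rfl | hk1
        · exact coeff_zero _
        · exact qc0 k (by omega)
    obtain ⟨hi2, c2, hvan2, heq2⟩ := (IH hd2).2.2 (m-1) hmin2
    have hc2s : ∀ k, k ≤ p + 1 → c2 k = 0 := by
      intro k hk
      apply hvan2
      intro j hj1 hj2
      exact qcmid j (by omega) (by omega)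
    have hmu2 : ∀ k, coeffW n mu k =
        coeffW n (l - 2 • omegaW n (p + 1) - alphaSumW n m p) k - coeffW n (Sn n c2) k := by
      intro k
      have h5 : coeffW n (l - 2 • omegaW n (p + 1) - alphaSumW n m p - mu) k
          = coeffW n (Sn n c2) k := by rw [heq2]
      simp only [coeff_sub] at h5 ⊢
      omega
    refine ⟨?_, ?_, ?_⟩
    · intro k hk
      rw [coeff_add, homega3 k (by omega), hi2 k (by omega)]; ring
    · have hz := Sn_coeff_zero (n := n) c2 (m-1) (hc2s _ (by omega)) (hc2s _ (by omega))
        (hc2s _ (by omega))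
      rw [coeff_add, homega3 (m-1) (by omega), hmu2, hz]
      have h7 := qcm1 hm2
      simp only [coeff_sub] at h7 ⊢
      omega
    · refine ⟨fun k => ((if m ≤ k ∧ k ≤ p then 1 else 0) + (if k = p + 1 then 1 else 0)) + c2 k,
        ?_, eCalc c2 heq2⟩
      intro k hk
      show ((if m ≤ k ∧ k ≤ p then 1 else 0) + (if k = p + 1 then 1 else 0)) + c2 k = 0
      rw [if_neg (by omega), if_neg (by omega), hc2s k (by omega)]

lemma main0 {n : ℕ} : ∀ {s : ℕ} {l mu : Wt n}, Sig0 n s l mu → MA n s l mu := by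
  intro s l mu h
  induction h using Sig0.rec (motive_2 := fun s l mu _ => MB n s l mu) with
  | base l => exact L_base l
  | step0 s m l mu hs hht hm h IH => exact L_step0 hs hht hm IH
  | step1 s m l mu hs hht hm h IH => exact L_step1 hs hht hm IH
  | caseA s m p l mu hht hm hp h0 h IH => exact L_caseA hht hm hp h0 IH
  | caseB1 m p l hht hm hp h1 => exact L_caseB1 hht hm hp h1
  | caseB2 s m p l mu hht hm hp h1 h IH => exact L_caseB2 hht hm hp h1 IH
  | caseB3 s m p l mu hht hm hp h1 h IH => exact L_caseB3 hht hm hp h1 IH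

lemma main1 {n : ℕ} : ∀ {s : ℕ} {l mu : Wt n}, Sig1 n s l mu → MB n s l mu := by
  intro s l mu h
  induction h using Sig1.rec (motive_1 := fun s l mu _ => MA n s l mu) with
  | base l => exact L_base l
  | step0 s m l mu hs hht hm h IH => exact L_step0 hs hht hm IH
  | step1 s m l mu hs hht hm h IH => exact L_step1 hs hht hm IH
  | caseA s m p l mu hht hm hp h0 h IH => exact L_caseA hht hm hp h0 IH
  | caseB1 m p l hht hm hp h1 => exact L_caseB1 hht hm hp h1
  | caseB2 s m p l mu hht hm hp h1 h IH => exact L_caseB2 hht hm hp h1 IH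
  | caseB3 s m p l mu hht hm hp h1 h IH => exact L_caseB3 hht hm hp h1 IH

/-- for μ ∈ Σ_s(λ), μ(h_k) = 0 for k < min λ − 1, μ(h_{min λ − 1}) ≤ 1,
and λ − μ ∈ Σ_{k ≥ min λ} ℤ₊ α_k. -/
theorem sigma_support (n : ℕ) (l : Wt n) (hl : IsDomOne n l) (m : ℕ)
    (hm : IsMinIdx n l m) (s : ℕ) (mu : Wt n)
    (hmu : Sig0 n s l mu ∨ Sig1 n s l mu) :
    (∀ k, k + 1 < m → coeffW n mu k = 0) ∧
    coeffW n mu (m - 1) ≤ 1 ∧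
    ∃ c : ℕ → ℕ, (∀ k < m, c k = 0) ∧
      l - mu = ∑ k ∈ Finset.Icc 1 n, (c k : ℤ) • alphaW n k := by
  have h1m := min_pos hm
  rcases hmu with h | h
  · obtain ⟨hi, c, hvan, heq⟩ := (main0 h hl).2.2 m hm
    refine ⟨fun k hk => hi k (by omega), ?_, c, ?_, heq⟩
    · have := hi (m - 1) (by omega)
      omega
    · intro k hk
      exact hvan k (fun j hj1 hj2 => absurd hj1 (by omega))
  · obtain ⟨hi, hle, c, hvan, heq⟩ := main1 h hl m hm
    exact ⟨hi, hle, c, hvan, heq⟩
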